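/- Let q = 5^k. The trinomial f(x) = x^{4q+1} + x^{5q} - x^{q+4} is a permutation polynomial of F_{q^2} if and only if k is even. -/

import Mathlib

/-!
Write `x̄ = x ^ q`, so that `f(x) = x̄⁴x + x̄⁵ - x̄x⁴`. In characteristic `5`,
`f(x) + f(x) ^ q = (x + x̄)⁵`, so `f(x) = f(y)` forces `x` and `y` to have the same trace `s`.
Substituting `x̄ = s - x`, `ȳ = s - y`, the difference of `f - f ^ q` at `x` and `y` becomes
`2 (x - y) (A² - 2B²)`, where `A = (x - y)² + 2s²` is fixed and `B = 2s(x + y - s)` is negated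
by conjugation.

A square root `t` of `2` lies in `𝔽₂₅ ⊆ 𝔽_{q²}`, and `t ^ q = (-1)ᵏ t` since `t⁵ = 4t = -t`.
For `k` even, `A = ±tB` is compatible with conjugation only if `A = 0`; then `s² = 2(x - y)²`,
and the same argument gives `x = y`. For `k` odd, `f(1 + 2t) = f(1)`.
-/

open Function

instance Nat.fact_prime_five : Fact (Nat.Prime 5) := ⟨Nat.prime_five⟩

section Involution

variable {F : Type*} [Field F] (σ : F →+* F)

/-- The paper's `f`, with `σ` in place of the Frobenius `x ↦ x ^ q`. -/
def trinomial (x : F) : F := σ x ^ 4 * x + σ x ^ 5 - σ x * x ^ 4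

variable {σ}

lemma eq_zero_of_sq_eq_sq_mul_sq (h2 : (2 : F) ≠ 0) {a b t : F} (ht : t ≠ 0) (hσt : σ t = t)
    (ha : σ a = a) (hb : σ b = -b) (h : a ^ 2 = t ^ 2 * b ^ 2) : a = 0 ∧ b = 0 := by
  have hprod : (a - t * b) * σ (a - t * b) = 0 := by
    simp only [map_sub, map_mul, ha, hb, hσt]
    linear_combination h
  have hab : a = t * b := by
    rcases mul_eq_zero.mp hprod with hc | hc
    · exact sub_eq_zero.mp hc
    · exact sub_eq_zero.mp ((map_eq_zero σ).mp hc)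
  have hab' : a = -(t * b) := by simpa only [map_mul, ha, hb, hσt, mul_neg] using congrArg σ hab
  have hb0 : b = 0 := by
    have : 2 * t * b = 0 := by linear_combination hab' - hab
    simpa [h2, ht] using this
  exact ⟨by rw [hab, hb0, mul_zero], hb0⟩

variable [CharP F 5]

lemma two_ne_zero_of_charP_five : (2 : F) ≠ 0 := by
  exact_mod_cast CharP.cast_ne_zero_of_ne_of_prime F Nat.prime_two (by norm_num)

lemma ne_zero_of_sq_eq_two {t : F} (ht : t ^ 2 = 2) : t ≠ 0 := by
  rintro rfl
  exact two_ne_zero_of_charP_five (by simpa using ht.symm)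

lemma trinomial_add_map_trinomial (hσ : Involutive σ) (x : F) :
    trinomial σ x + σ (trinomial σ x) = (x + σ x) ^ 5 := by
  simp only [trinomial, map_add, map_sub, map_mul, map_pow, hσ x, add_pow_char]
  ring

lemma add_map_eq_of_trinomial_eq (hσ : Involutive σ) {x y : F}
    (h : trinomial σ x = trinomial σ y) : x + σ x = y + σ y :=
  frobenius_inj F 5 <| by
    simp only [frobenius_def, ← trinomial_add_map_trinomial hσ, h]

lemma sub_mul_eq_zero_of_trinomial_eq (hσ : Involutive σ) {x y s : F} (hx : x + σ x = s)
    (hy : y + σ y = s) (h : trinomial σ x = trinomial σ y) :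
    (x - y) * (((x - y) ^ 2 + 2 * s ^ 2) ^ 2 - 2 * (2 * s * (x + y - s)) ^ 2) = 0 := by
  have hσh := congrArg σ h
  simp only [trinomial, map_add, map_sub, map_mul, map_pow, hσ x, hσ y] at h hσh
  rw [eq_sub_of_add_eq' hx, eq_sub_of_add_eq' hy] at h hσh
  linear_combination (norm := skip) 3 * h - 3 * hσh
  ring_nf
  reduce_mod_char!

theorem trinomial_injective (hσ : Involutive σ) {t : F} (ht : t ^ 2 = 2) (hσt : σ t = t) :
    Injective (trinomial σ) := by
  intro x y h
  obtain ⟨s, hx⟩ : ∃ s, x + σ x = s := ⟨_, rfl⟩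
  have hy : y + σ y = s := (add_map_eq_of_trinomial_eq hσ h).symm.trans hx
  have hσs : σ s = s := by rw [← hx, map_add, hσ x, add_comm]
  have hσd : σ (x - y) = -(x - y) := by
    rw [map_sub, eq_sub_of_add_eq' hx, eq_sub_of_add_eq' hy]
    ring
  have hσB : σ (2 * s * (x + y - s)) = -(2 * s * (x + y - s)) := by
    simp only [map_mul, map_sub, map_add, map_ofNat, hσs, eq_sub_of_add_eq' hx,
      eq_sub_of_add_eq' hy]
    ring
  have h2 := two_ne_zero_of_charP_five (F := F)
  have ht0 := ne_zero_of_sq_eq_two ht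
  rcases mul_eq_zero.mp (sub_mul_eq_zero_of_trinomial_eq hσ hx hy h) with hxy | hnorm
  · exact sub_eq_zero.mp hxy
  have hA : (x - y) ^ 2 + 2 * s ^ 2 = 0 := by
    refine (eq_zero_of_sq_eq_sq_mul_sq h2 ht0 hσt ?_ hσB ?_).1
    · simp only [map_add, map_mul, map_pow, map_ofNat, hσd, hσs, neg_sq]
    · linear_combination hnorm - (2 * s * (x + y - s)) ^ 2 * ht
  have hd := (eq_zero_of_sq_eq_sq_mul_sq h2 ht0 hσt hσs hσd <| by
    linear_combination (-2) * hA - (x - y) ^ 2 * ht + s ^ 2 * CharP.ofNat_eq_zero F 5).2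
  exact sub_eq_zero.mp hd

theorem not_injective_trinomial {t : F} (ht : t ^ 2 = 2) (hσt : σ t = -t) :
    ¬ Injective (trinomial σ) := by
  intro hinj
  have hcoll : trinomial σ (1 + 2 * t) = trinomial σ 1 := by
    simp only [trinomial, map_add, map_mul, map_one, map_ofNat, hσt]
    linear_combination (32 * t ^ 3 + 80 * t ^ 2 + 16 * t + 200) * ht +
      (2 * t + 80) * CharP.ofNat_eq_zero F 5
  have h2t : 2 * t = 0 := by linear_combination hinj hcoll
  exact mul_ne_zero two_ne_zero_of_charP_five (ne_zero_of_sq_eq_two ht) h2t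

end Involution

lemma trinomial_iterateFrobenius {F : Type*} [Field F] {p : ℕ} [ExpChar F p] (k : ℕ) (x : F) :
    trinomial (iterateFrobenius F p k) x =
      x ^ (4 * p ^ k + 1) + x ^ (5 * p ^ k) - x ^ (p ^ k + 4) := by
  simp only [trinomial, iterateFrobenius_def]
  ring

lemma iterateFrobenius_involutive {F : Type*} [Field F] [Fintype F] {p k : ℕ} [ExpChar F p]
    (hF : Fintype.card F = (p ^ k) ^ 2) : Involutive (iterateFrobenius F p k) := by
  intro x
  rw [iterateFrobenius_def, iterateFrobenius_def, ← pow_mul, ← sq, ← hF, FiniteField.pow_card]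

lemma iterateFrobenius_five_of_sq_eq_two {R : Type*} [CommRing R] [CharP R 5] (k : ℕ) {t : R}
    (ht : t ^ 2 = 2) : iterateFrobenius R 5 k t = (-1) ^ k * t := by
  have ht5 : t ^ 5 = -t := by
    linear_combination (t ^ 3 + 2 * t) * ht + t * CharP.ofNat_eq_zero R 5
  induction k with
  | zero => simp
  | succ k ih =>
    rw [iterateFrobenius_def, pow_succ', pow_mul, ht5, ← iterateFrobenius_def, map_neg, ih]
    ring

lemma exists_sq_eq_two_of_card_eq {F : Type*} [Field F] [Fintype F] {k : ℕ}
    (hF : Fintype.card F = (5 ^ k) ^ 2) : ∃ t : F, t ^ 2 = 2 := by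
  have hcard : Fintype.card F % 8 = 1 := by
    rw [hF, ← pow_mul, mul_comm, pow_mul, Nat.pow_mod]
    norm_num
  obtain ⟨t, ht⟩ := (FiniteField.isSquare_two_iff (F := F)).mpr (by omega)
  exact ⟨t, by rw [ht, sq]⟩

theorem stmt_15_general (k : ℕ) (F : Type*) [Field F] [Fintype F]
    (hF : Fintype.card F = (5 ^ k) ^ 2) :
    Function.Bijective
        (fun x : F => x ^ (4 * 5 ^ k + 1) + x ^ (5 * 5 ^ k) - x ^ (5 ^ k + 4)) ↔
      Even k := by
  have : CharP F 5 := charP_of_card_eq_prime_pow (by rw [hF, ← pow_mul])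
  obtain ⟨t, ht⟩ := exists_sq_eq_two_of_card_eq hF
  have hσt := iterateFrobenius_five_of_sq_eq_two k ht
  simp only [← trinomial_iterateFrobenius, ← Finite.injective_iff_bijective]
  rcases Nat.even_or_odd k with hk | hk
  · simp only [hk, iff_true]
    refine trinomial_injective (iterateFrobenius_involutive hF) ht ?_
    rw [hσt, hk.neg_one_pow, one_mul]
  · simp only [Nat.not_even_iff_odd.mpr hk, iff_false]
    refine not_injective_trinomial ht ?_
    rw [hσt, hk.neg_one_pow, neg_one_mul]

theorem stmt_15 (k : ℕ) (hk : 0 < k) (F : Type*) [Field F] [Fintype F]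
    (hF : Fintype.card F = (5 ^ k) ^ 2) :
    Function.Bijective
        (fun x : F => x ^ (4 * 5 ^ k + 1) + x ^ (5 * 5 ^ k) - x ^ (5 ^ k + 4)) ↔
      Even k :=
  stmt_15_general k F hF
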